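/- Let B > 0 and let X = (X₁, X₂) be uniform on {0,B}². Define the policy σ^S(x) = {1} if x₁ = x₂ and σ^S(x) = {2} otherwise. Then: (i) σ^S is fully revealing for a sophisticated agent (the map x ↦ (σ^S(x), x_{σ^S(x)}) is injective on the support), so R^S(σ^S) = 0; (ii) the constant policy σ^N ≡ {1} is naive-optimal with R^N(σ^N) = B²/4, and since its selection is constant, a sophisticated agent gains nothing: R^S(σ^N) = R^N(σ^N) = B²/4; hence the price of simplicity is Δ^S = R^S(σ^N) − R^S(σ^S) = B²/4. -/

import Mathlib

/-!
With at most one coordinate revealed, an unrevealed coordinate keeps its prior mean `B / 2`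
(the coordinates are independent), and it lies at distance `B / 2` from it. So each instance
costs the naive agent exactly `B² / 4` per unrevealed coordinate: `R^N ≥ B² / 4`, with equality
for the constant policy. A constant selection tells nothing beyond the revealed values, so there
the sophisticated and naive predictions agree. The policy `σ^S` instead encodes whether
`x₁ = x₂` in *which* coordinate it shows, and the shown value supplies the rest of `x`; an
injective signal makes the sophisticated posterior a point mass, so `R^S(σ^S) = 0`.
-/

open Finset
open scoped Classical

noncomputable section

/-- The support of the uniform prior: the four states of `{0,B}²`. -/
def supp17 (B : ℝ) : Finset (ℝ × ℝ) := {(0, 0), (0, B), (B, 0), (B, B)}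

/-- Coordinates of an instance. -/
def coord17 (j : Fin 2) (x : ℝ × ℝ) : ℝ := if j = 0 then x.1 else x.2

/-- The signal `(I, x_I)` sent by a policy at instance `x`. -/
def sig17 (pol : ℝ × ℝ → Finset (Fin 2)) (x : ℝ × ℝ) :
    Finset (Fin 2) × (Fin 2 → ℝ) :=
  (pol x, fun j => if j ∈ pol x then coord17 j x else 0)

/-- Naive conditional mean `E[X_j | X_I = x_I]` under the uniform prior. -/
def condMean17 (B : ℝ) (I : Finset (Fin 2)) (x : ℝ × ℝ) (j : Fin 2) : ℝ :=
  (∑ y ∈ (supp17 B).filter (fun y => ∀ i ∈ I, coord17 i y = coord17 i x),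
      coord17 j y) /
    (((supp17 B).filter (fun y => ∀ i ∈ I, coord17 i y = coord17 i x)).card : ℝ)

/-- Naive prediction. -/
def predN17 (B : ℝ) (pol : ℝ × ℝ → Finset (Fin 2)) (x : ℝ × ℝ) (j : Fin 2) : ℝ :=
  if j ∈ pol x then coord17 j x else condMean17 B (pol x) x j

/-- Expected naive loss (squared recovery) under the uniform prior. -/
def RN17 (B : ℝ) (pol : ℝ × ℝ → Finset (Fin 2)) : ℝ :=
  (1 / 4) * ∑ x ∈ supp17 B, ∑ j : Fin 2, (coord17 j x - predN17 B pol x j) ^ 2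

/-- Sophisticated prediction: posterior mean over states with the same signal. -/
def predS17 (B : ℝ) (pol : ℝ × ℝ → Finset (Fin 2)) (x : ℝ × ℝ) (j : Fin 2) : ℝ :=
  (∑ y ∈ (supp17 B).filter (fun y => sig17 pol y = sig17 pol x), coord17 j y) /
    (((supp17 B).filter (fun y => sig17 pol y = sig17 pol x)).card : ℝ)

/-- Expected sophisticated loss (squared recovery) under the uniform prior. -/
def RS17 (B : ℝ) (pol : ℝ × ℝ → Finset (Fin 2)) : ℝ :=
  (1 / 4) * ∑ x ∈ supp17 B, ∑ j : Fin 2, (coord17 j x - predS17 B pol x j) ^ 2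

/-- The policy revealing coordinate 1 iff the two coordinates agree. -/
def sophPol17 (x : ℝ × ℝ) : Finset (Fin 2) :=
  if x.1 = x.2 then {0} else {1}

/-- The constant policy always revealing coordinate 1. -/
def naivePol17 : ℝ × ℝ → Finset (Fin 2) := fun _ => {0}

lemma coord17_eq_zero_or_eq {B : ℝ} {x : ℝ × ℝ} (hx : x ∈ supp17 B) (j : Fin 2) :
    coord17 j x = 0 ∨ coord17 j x = B := by
  simp only [supp17, mem_insert, mem_singleton] at hx
  rcases hx with rfl | rfl | rfl | rfl <;> fin_cases j <;> simp [coord17]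

lemma sub_half_sq_of_mem_supp17 {B : ℝ} {x : ℝ × ℝ} (hx : x ∈ supp17 B) (j : Fin 2) :
    (coord17 j x - B / 2) ^ 2 = B ^ 2 / 4 := by
  rcases coord17_eq_zero_or_eq hx j with h | h <;> rw [h] <;> ring

lemma card_supp17 {B : ℝ} (hB : B ≠ 0) : #(supp17 B) = 4 := by
  simp [supp17, hB, hB.symm]

lemma condMean17_of_notMem {B : ℝ} (hB : B ≠ 0) {I : Finset (Fin 2)} (hI : #I ≤ 1)
    {j : Fin 2} (hj : j ∉ I) {x : ℝ × ℝ} (hx : x ∈ supp17 B) :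
    condMean17 B I x j = B / 2 := by
  obtain ⟨i, hi⟩ := card_le_one_iff_subset_singleton.mp hI
  simp only [supp17, mem_insert, mem_singleton] at hx
  rcases subset_singleton_iff.mp hi with rfl | rfl
  · fin_cases j <;> simp [condMean17, supp17, coord17, filter_insert, hB, hB.symm] <;> ring
  · obtain rfl : i = 1 - j := by fin_cases i <;> fin_cases j <;> simp_all
    fin_cases j <;> rcases hx with rfl | rfl | rfl | rfl <;>
      simp [condMean17, supp17, coord17, filter_insert, filter_singleton, hB, hB.symm]

lemma condMean17_of_mem {B : ℝ} {I : Finset (Fin 2)} {j : Fin 2} (hj : j ∈ I) {x : ℝ × ℝ}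
    (hx : x ∈ supp17 B) : condMean17 B I x j = coord17 j x := by
  set F := (supp17 B).filter (fun y => ∀ i ∈ I, coord17 i y = coord17 i x)
  have hF : F.Nonempty := ⟨x, mem_filter.mpr ⟨hx, fun _ _ => rfl⟩⟩
  have hsum : ∑ y ∈ F, coord17 j y = #F * coord17 j x := by
    rw [← nsmul_eq_mul, ← sum_const]
    exact sum_congr rfl fun y hy => (mem_filter.mp hy).2 j hj
  rw [condMean17, hsum, mul_div_cancel_left₀ _ (by exact_mod_cast hF.card_ne_zero)]

lemma naiveLoss17_eq {B : ℝ} (hB : B ≠ 0) {pol : ℝ × ℝ → Finset (Fin 2)} {x : ℝ × ℝ}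
    (hpol : #(pol x) ≤ 1) (hx : x ∈ supp17 B) :
    ∑ j : Fin 2, (coord17 j x - predN17 B pol x j) ^ 2 = #(pol x)ᶜ * (B ^ 2 / 4) := by
  have revealed : ∑ j ∈ pol x, (coord17 j x - predN17 B pol x j) ^ 2 = 0 :=
    sum_eq_zero fun j hj => by simp [predN17, hj]
  rw [← nsmul_eq_mul, ← sum_const, ← sum_add_sum_compl (pol x), revealed, zero_add]
  refine sum_congr rfl fun j hj => ?_
  rw [mem_compl] at hj
  rw [predN17, if_neg hj, condMean17_of_notMem hB hpol hj hx, sub_half_sq_of_mem_supp17 hx]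

lemma RN17_eq {B : ℝ} (hB : B ≠ 0) {pol : ℝ × ℝ → Finset (Fin 2)}
    (hpol : ∀ x, #(pol x) ≤ 1) :
    RN17 B pol = (1 / 4) * ∑ x ∈ supp17 B, #(pol x)ᶜ * (B ^ 2 / 4) := by
  rw [RN17, sum_congr rfl fun x hx => naiveLoss17_eq hB (hpol x) hx]

lemma RN17_naivePol17 {B : ℝ} (hB : B ≠ 0) : RN17 B naivePol17 = B ^ 2 / 4 := by
  rw [RN17_eq (pol := naivePol17) hB fun _ => (card_singleton _).le]
  have : #({0}ᶜ : Finset (Fin 2)) = 1 := by decide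
  simp [naivePol17, card_supp17 hB, this]

lemma le_RN17 {B : ℝ} (hB : B ≠ 0) {pol : ℝ × ℝ → Finset (Fin 2)}
    (hpol : ∀ x, #(pol x) ≤ 1) : B ^ 2 / 4 ≤ RN17 B pol := by
  have hcompl : ∀ x, 1 ≤ #(pol x)ᶜ := fun x => by
    rw [card_compl, Fintype.card_fin]; have := hpol x; omega
  calc B ^ 2 / 4 = (1 / 4) * ∑ _x ∈ supp17 B, 1 * (B ^ 2 / 4) := by
        rw [sum_const, card_supp17 hB]; ring
    _ ≤ RN17 B pol := by
        rw [RN17_eq hB hpol]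
        gcongr with x
        exact_mod_cast hcompl x

lemma sig17_const_eq_iff {I : Finset (Fin 2)} {x y : ℝ × ℝ} :
    sig17 (fun _ => I) y = sig17 (fun _ => I) x ↔ ∀ i ∈ I, coord17 i y = coord17 i x := by
  simp only [sig17, Prod.mk.injEq, true_and, funext_iff]
  exact forall_congr' fun i => by by_cases hi : i ∈ I <;> simp [hi]

lemma predS17_const {B : ℝ} {I : Finset (Fin 2)} {x : ℝ × ℝ} (hx : x ∈ supp17 B)
    (j : Fin 2) : predS17 B (fun _ => I) x j = predN17 B (fun _ => I) x j := by
  have hpost : predS17 B (fun _ => I) x j = condMean17 B I x j := by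
    simp only [predS17, condMean17, sig17_const_eq_iff]
  rw [hpost, predN17]
  split_ifs with hj
  · exact condMean17_of_mem hj hx
  · rfl

lemma RS17_const_eq_RN17 (B : ℝ) (I : Finset (Fin 2)) :
    RS17 B (fun _ => I) = RN17 B (fun _ => I) := by
  rw [RS17, RN17]
  congr 1
  exact sum_congr rfl fun x hx => sum_congr rfl fun j _ => by rw [predS17_const hx]

lemma predS17_of_injOn {B : ℝ} {pol : ℝ × ℝ → Finset (Fin 2)}
    (hinj : Set.InjOn (sig17 pol) (supp17 B)) {x : ℝ × ℝ} (hx : x ∈ supp17 B) (j : Fin 2) :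
    predS17 B pol x j = coord17 j x := by
  have hpost : (supp17 B).filter (fun y => sig17 pol y = sig17 pol x) = {x} := by
    ext y
    simp only [mem_filter, mem_singleton]
    exact ⟨fun ⟨hy, h⟩ => hinj hy hx h, by rintro rfl; exact ⟨hx, rfl⟩⟩
  simp [predS17, hpost]

lemma RS17_eq_zero_of_injOn {B : ℝ} {pol : ℝ × ℝ → Finset (Fin 2)}
    (hinj : Set.InjOn (sig17 pol) (supp17 B)) : RS17 B pol = 0 := by
  rw [RS17, sum_eq_zero fun x hx => sum_eq_zero fun j _ => by
    rw [predS17_of_injOn hinj hx, sub_self, sq, mul_zero], mul_zero]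

lemma sig17_sophPol17_injOn {B : ℝ} (hB : B ≠ 0) :
    Set.InjOn (sig17 sophPol17) (supp17 B) := by
  intro x hx y hy h
  simp only [supp17, coe_insert, coe_singleton, Set.mem_insert_iff,
    Set.mem_singleton_iff] at hx hy
  rcases hx with rfl | rfl | rfl | rfl <;> rcases hy with rfl | rfl | rfl | rfl <;>
    simp_all [sig17, sophPol17, coord17, funext_iff, Fin.forall_fin_two, Ne.symm hB]

theorem stmt_17 (B : ℝ) (hB : 0 < B) :
    -- (i) fully revealing for a sophisticated agent, hence zero risk
    Set.InjOn (sig17 sophPol17) ↑(supp17 B) ∧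
    RS17 B sophPol17 = 0 ∧
    -- (ii) the constant policy is naive-optimal with risk B²/4, and since its
    -- selection is constant, a sophisticated agent gains nothing
    RN17 B naivePol17 = B ^ 2 / 4 ∧
    (∀ pol : ℝ × ℝ → Finset (Fin 2), (∀ x, (pol x).card ≤ 1) →
      RN17 B naivePol17 ≤ RN17 B pol) ∧
    RS17 B naivePol17 = RN17 B naivePol17 ∧
    -- price of simplicity
    RS17 B naivePol17 - RS17 B sophPol17 = B ^ 2 / 4 := by
  have hB0 : B ≠ 0 := hB.ne'
  have hinj := sig17_sophPol17_injOn hB0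
  have hsoph := RS17_eq_zero_of_injOn hinj
  have hnaive := RN17_naivePol17 hB0
  have hconst : RS17 B naivePol17 = RN17 B naivePol17 := RS17_const_eq_RN17 B {0}
  refine ⟨hinj, hsoph, hnaive, fun pol hpol => hnaive ▸ le_RN17 hB0 hpol, hconst, ?_⟩
  rw [hsoph, sub_zero, hconst, hnaive]

end
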